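/- arXiv:0803.4388 — 6 statements merged into one kernel-verified Lean document; each statement's English description precedes it below -/
import Mathlib

section
/- For all n ≥ 1 and r ≥ 0, H_n^(r) = C(n+r-1, r-1) · (H_{n+r-1} - H_{r-1}) when r ≥ 1, where H_m denotes the m-th harmonic number. -/
noncomputable def hyperharmonic : ℕ → ℕ → ℝ
  | 0, n => if n = 0 then 0 else 1 / n
  | r + 1, n => ∑ k ∈ Finset.Icc 1 n, hyperharmonic r k

noncomputable def harmonicNum (m : ℕ) : ℝ := ∑ k ∈ Finset.Icc 1 m, (1 : ℝ) / k

/-!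
Both sides satisfy the Pascal-type recurrence `H_{n+1}^(r+1) = H_n^(r+1) + H_{n+1}^(r)`, vanish
at `n = 0` and agree at `r = 1`. For the closed form, the recurrence reduces after Pascal's rule
for `C(N+1, s+1)` to the absorption identity `(N + 1) C(N, s) = (s + 1) C(N+1, s+1)`.
-/

lemma harmonicNum_zero : harmonicNum 0 = 0 := by simp [harmonicNum]

lemma harmonicNum_succ (m : ℕ) : harmonicNum (m + 1) = harmonicNum m + 1 / (m + 1) := by
  rw [harmonicNum, Finset.sum_Icc_succ_top (by omega), ← harmonicNum]
  push_cast
  rfl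

lemma hyperharmonic_zero (n : ℕ) : hyperharmonic 0 n = 1 / n := by
  cases n <;> simp [hyperharmonic]

lemma hyperharmonic_one (n : ℕ) : hyperharmonic 1 n = harmonicNum n := by
  simp only [hyperharmonic.eq_2, hyperharmonic_zero, harmonicNum]

lemma hyperharmonic_succ_zero (r : ℕ) : hyperharmonic (r + 1) 0 = 0 := by
  simp [hyperharmonic]

lemma hyperharmonic_succ_succ (r n : ℕ) :
    hyperharmonic (r + 1) (n + 1) = hyperharmonic (r + 1) n + hyperharmonic r (n + 1) := by
  simp only [hyperharmonic]
  exact Finset.sum_Icc_succ_top (by omega) _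

/-- The closed form for `H_n^(s+1)`, indexed by `s = r - 1` to avoid truncated subtraction. -/
noncomputable def hyperharmonicFormula (s n : ℕ) : ℝ :=
  (n + s).choose s * (harmonicNum (n + s) - harmonicNum s)

lemma hyperharmonicFormula_zero_left (n : ℕ) : hyperharmonicFormula 0 n = harmonicNum n := by
  simp [hyperharmonicFormula, harmonicNum_zero]

lemma hyperharmonicFormula_zero_right (s : ℕ) : hyperharmonicFormula s 0 = 0 := by
  simp [hyperharmonicFormula]

lemma hyperharmonicFormula_succ_succ (s n : ℕ) :
    hyperharmonicFormula (s + 1) (n + 1) =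
      hyperharmonicFormula (s + 1) n + hyperharmonicFormula s (n + 1) := by
  set N := n + s + 1
  have absorption : ((N : ℝ) + 1) * N.choose s = (N + 1).choose (s + 1) * ((s : ℝ) + 1) :=
    mod_cast Nat.add_one_mul_choose_eq N s
  have pascal : ((N + 1).choose (s + 1) : ℝ) = N.choose s + N.choose (s + 1) :=
    mod_cast Nat.choose_succ_succ' N s
  simp only [hyperharmonicFormula, show n + 1 + (s + 1) = N + 1 by omega,
    show n + (s + 1) = N by omega, show n + 1 + s = N by omega, harmonicNum_succ]
  rw [pascal] at absorption ⊢
  field_simp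
  linear_combination -absorption

theorem hyperharmonic_succ_eq_formula (s n : ℕ) :
    hyperharmonic (s + 1) n = hyperharmonicFormula s n := by
  induction s generalizing n with
  | zero => rw [hyperharmonic_one, hyperharmonicFormula_zero_left]
  | succ s ihs =>
    induction n with
    | zero => rw [hyperharmonic_succ_zero, hyperharmonicFormula_zero_right]
    | succ n ihn =>
      rw [hyperharmonic_succ_succ, hyperharmonicFormula_succ_succ, ihn, ihs]

theorem hyperharmonic_closed_form_general (n r : ℕ) (hr : 1 ≤ r) :
    hyperharmonic r n =
      (Nat.choose (n + r - 1) (r - 1) : ℝ) * (harmonicNum (n + r - 1) - harmonicNum (r - 1)) := by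
  obtain ⟨s, rfl⟩ : ∃ s, r = s + 1 := ⟨r - 1, by omega⟩
  rw [← add_assoc, Nat.add_sub_cancel, Nat.add_sub_cancel]
  exact hyperharmonic_succ_eq_formula s n

theorem hyperharmonic_closed_form (n r : ℕ) (hn : 1 ≤ n) (hr : 1 ≤ r) :
    hyperharmonic r n =
      (Nat.choose (n + r - 1) (r - 1) : ℝ) * (harmonicNum (n + r - 1) - harmonicNum (r - 1)) :=
  hyperharmonic_closed_form_general n r hr
end

section
/- For all k ≥ 1 and r with 0 ≤ r < k, the generating function identity Σ_{n=0}^∞ F_{kn+r} t^n = (F_r + (-1)^r F_{k-r} t) / (1 - L_k t + (-1)^k t^2) holds as an identity of formal power series (equivalently, for |t| sufficiently small). -/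
/-! Binet's formula writes `F_{kn+r}` as `(φ^r φ^{kn} - ψ^r ψ^{kn}) / √5`, so the series is a
difference of two geometric series with ratios `φ^k t` and `ψ^k t`. Their sum has denominator
`(1 - φ^k t)(1 - ψ^k t) = 1 - L_k t + (-1)^k t^2`, since `φ^k + ψ^k = L_k` and `φψ = -1`, and
numerator `F_r + (φ^k ψ^r - φ^r ψ^k) t / √5 = F_r + (-1)^r F_{k-r} t`. -/

open Real goldenRatio

def lucas : ℕ → ℕ
  | 0 => 2
  | 1 => 1
  | n + 2 => lucas (n + 1) + lucas n

theorem coe_lucas_eq (n : ℕ) : (lucas n : ℝ) = φ ^ n + ψ ^ n := by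
  induction n using Nat.twoStepInduction with
  | zero => norm_num [lucas]
  | one => simp [lucas, goldenRatio_add_goldenConj]
  | more n ih₁ ih₀ =>
    rw [lucas, Nat.cast_add, ih₁, ih₀]
    -- `φ` and `ψ` are abbreviations that `ring` unfolds into expressions in `√5`
    have h5 : √5 ^ 2 = 5 := sq_sqrt (by norm_num)
    linear_combination φ ^ n * goldenRatio_sq + ψ ^ n * goldenConj_sq - (φ ^ n + ψ ^ n) / 2 * h5

theorem coe_fib_mul_add (k n r : ℕ) :
    (Nat.fib (k * n + r) : ℝ) = φ ^ r / √5 * (φ ^ k) ^ n - ψ ^ r / √5 * (ψ ^ k) ^ n := by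
  rw [coe_fib_eq, pow_add, pow_add, pow_mul, pow_mul]
  ring

theorem neg_one_pow_mul_coe_fib_sub {k r : ℕ} (hr : r ≤ k) :
    (-1) ^ r * (Nat.fib (k - r) : ℝ) = ψ ^ r / √5 * φ ^ k - φ ^ r / √5 * ψ ^ k := by
  obtain ⟨m, rfl⟩ := Nat.exists_eq_add_of_le hr
  rw [Nat.add_sub_cancel_left, coe_fib_eq, ← goldenRatio_mul_goldenConj, mul_pow]
  ring

theorem abs_goldenConj_pow_le_goldenRatio_pow (k : ℕ) : |ψ ^ k| ≤ φ ^ k := by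
  rw [abs_pow]
  gcongr
  rw [abs_of_neg goldenConj_neg]
  linarith [neg_one_lt_goldenConj, one_lt_goldenRatio]

theorem hasSum_sub_geometric {K : Type*} [NormedField K] {a b t : K} (α β : K)
    (ha : ‖a * t‖ < 1) (hb : ‖b * t‖ < 1) :
    HasSum (fun n : ℕ => (α * a ^ n - β * b ^ n) * t ^ n)
      ((α - β + (β * a - α * b) * t) / (1 - (a + b) * t + a * b * t ^ 2)) := by
  have hat : 1 - a * t ≠ 0 := sub_ne_zero.2 fun h => by simp [← h] at ha
  have hbt : 1 - b * t ≠ 0 := sub_ne_zero.2 fun h => by simp [← h] at hb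
  have hval : α * (1 - a * t)⁻¹ - β * (1 - b * t)⁻¹ =
      (α - β + (β * a - α * b) * t) / (1 - (a + b) * t + a * b * t ^ 2) := by
    rw [← div_eq_mul_inv, ← div_eq_mul_inv, div_sub_div _ _ hat hbt]
    congr 1 <;> ring
  refine hval ▸ (((hasSum_geometric_of_norm_lt_one ha).mul_left α).sub
    ((hasSum_geometric_of_norm_lt_one hb).mul_left β)).congr_fun fun n => ?_
  ring

theorem fib_general_generating_function_general (k r : ℕ) (hr : r < k) :
    ∃ ε > 0, ∀ t : ℝ, |t| < ε →
      HasSum (fun n : ℕ => (Nat.fib (k * n + r) : ℝ) * t ^ n)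
        (((Nat.fib r : ℝ) + (-1) ^ r * (Nat.fib (k - r) : ℝ) * t) /
          (1 - (lucas k : ℝ) * t + (-1) ^ k * t ^ 2)) := by
  have hφk : 0 < φ ^ k := pow_pos goldenRatio_pos k
  refine ⟨(φ ^ k)⁻¹, inv_pos.2 hφk, fun t ht => ?_⟩
  have hφt : φ ^ k * |t| < 1 := by rwa [← mul_one (φ ^ k)⁻¹, lt_inv_mul_iff₀ hφk] at ht
  have hφt' : ‖φ ^ k * t‖ < 1 := by rwa [norm_mul, norm_of_nonneg hφk.le, norm_eq_abs]
  have hψt : ‖ψ ^ k * t‖ < 1 := by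
    rw [norm_mul, norm_eq_abs, norm_eq_abs]
    exact lt_of_le_of_lt (by gcongr; exact abs_goldenConj_pow_le_goldenRatio_pow k) hφt
  have hsum := hasSum_sub_geometric (φ ^ r / √5) (ψ ^ r / √5) hφt' hψt
  rw [coe_fib_eq r, neg_one_pow_mul_coe_fib_sub hr.le, coe_lucas_eq,
    ← goldenRatio_mul_goldenConj, mul_pow, sub_div]
  exact hsum.congr_fun fun n => by rw [coe_fib_mul_add]

theorem fib_general_generating_function (k r : ℕ) (hk : 1 ≤ k) (hr : r < k) :
    ∃ ε > 0, ∀ t : ℝ, |t| < ε →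
      HasSum (fun n : ℕ => (Nat.fib (k * n + r) : ℝ) * t ^ n)
        (((Nat.fib r : ℝ) + (-1) ^ r * (Nat.fib (k - r) : ℝ) * t) /
          (1 - (lucas k : ℝ) * t + (-1) ^ k * t ^ 2)) :=
  fib_general_generating_function_general k r hr
end

section
/- For k ≥ 1, Σ_{n=1}^∞ (A_{n,k} + B_{n,k}) t^n = t(F_{2k} + t F_{2k-1})/(1 - t - t^2), where A_{n,k} = Σ_{i=0}^{k-1} C(n+k-i-2, n-1) F_{2i+1} and B_{n,k} = Σ_{i=0}^{n-1} C(n+k-i-2, k-1) F_i. -/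
/-!
Both `A n k` and `B n k` are sums `∑ i < m, C(m + n' - i - 2, n' - 1) f i` for suitable `f`, and such
a sum obeys Pascal's rule in `(m, n')`. Hence `S n k = A n k + B n k` satisfies
`S (n+1) (k+1) = S n (k+1) + S (n+1) k`, as does `F (n + 2k - 1)`, and both agree on the boundary
`n = 1` (sum of odd-indexed Fibonacci numbers) and `k = 1` (sum of the first Fibonacci numbers).
So the row is the shifted Fibonacci sequence, whose generating function follows from Binet's formula
and `F (m + n + 1) = F m F n + F (m + 1) F (n + 1)`.
-/

open Finset Nat Real

noncomputable def A (n k : ℕ) : ℝ :=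
  ∑ i ∈ Finset.range k, (Nat.choose (n + k - i - 2) (n - 1) : ℝ) * Nat.fib (2 * i + 1)

noncomputable def B (n k : ℕ) : ℝ :=
  ∑ i ∈ Finset.range n, (Nat.choose (n + k - i - 2) (k - 1) : ℝ) * Nat.fib i

section BinomConv

variable {R : Type*} [Semiring R]

def binomConv (f : ℕ → R) (m n : ℕ) : R :=
  ∑ i ∈ range m, ((m + n - i - 2).choose (n - 1) : R) * f i

theorem binomConv_succ_succ (f : ℕ → R) (m n : ℕ) :
    binomConv f (m + 1) (n + 2) = binomConv f (m + 1) (n + 1) + binomConv f m (n + 2) := by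
  have hextend : binomConv f m (n + 2) =
      ∑ i ∈ range (m + 1), ((m + n - i).choose (n + 1) : R) * f i := by
    rw [sum_range_succ, Nat.choose_eq_zero_of_lt (by omega : m + n - m < n + 1), binomConv]
    simp only [Nat.cast_zero, zero_mul, add_zero]
    refine sum_congr rfl fun i _ => ?_
    rw [show m + (n + 2) - i - 2 = m + n - i by omega, show n + 2 - 1 = n + 1 by omega]
  rw [hextend, binomConv, binomConv, ← sum_add_distrib]
  refine sum_congr rfl fun i hi => ?_
  rw [mem_range] at hi
  rw [show m + 1 + (n + 2) - i - 2 = (m + n - i) + 1 by omega,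
    show m + 1 + (n + 1) - i - 2 = m + n - i by omega, show n + 2 - 1 = n + 1 by omega,
    Nat.add_sub_cancel, Nat.choose_succ_succ, Nat.cast_add, add_mul]

theorem binomConv_one_right (f : ℕ → R) (m : ℕ) : binomConv f m 1 = ∑ i ∈ range m, f i := by
  simp [binomConv]

theorem binomConv_one_left (f : ℕ → R) (n : ℕ) : binomConv f 1 (n + 1) = f 0 := by
  simp [binomConv, show 1 + (n + 1) - 2 = n by omega]

end BinomConv

theorem A_eq_binomConv (n k : ℕ) : A n k = binomConv (fun i => (fib (2 * i + 1) : ℝ)) k n := by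
  simp only [A, binomConv, add_comm n k]

theorem B_eq_binomConv (n k : ℕ) : B n k = binomConv (fun i => (fib i : ℝ)) n k := rfl

theorem sum_range_fib_two_mul_add_one (k : ℕ) :
    ∑ i ∈ range k, fib (2 * i + 1) = fib (2 * k) := by
  induction k with
  | zero => simp
  | succ k ih => rw [sum_range_succ, ih, mul_add_one, fib_add_two]

theorem A_add_B_eq_fib (n k : ℕ) : A (n + 1) (k + 1) + B (n + 1) (k + 1) = fib (n + 2 * k + 2) := by
  simp only [A_eq_binomConv, B_eq_binomConv]
  induction k generalizing n with
  | zero =>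
    rw [binomConv_one_left, binomConv_one_right, ← Nat.cast_sum, fib_succ_eq_succ_sum (n + 1)]
    push_cast
    ring
  | succ k ihk =>
    induction n with
    | zero =>
      rw [binomConv_one_right, binomConv_one_left, ← Nat.cast_sum, sum_range_fib_two_mul_add_one]
      simp only [fib_zero, Nat.cast_zero, add_zero]
      ring_nf
    | succ n ihn =>
      have hk := ihk (n + 1)
      rw [binomConv_succ_succ _ (k + 1) n, binomConv_succ_succ _ (n + 1) k,
        show n + 1 + 2 * (k + 1) + 2 = n + 2 * k + 3 + 2 by ring, fib_add_two]
      rw [show n + 2 * (k + 1) + 2 = n + 2 * k + 3 + 1 by ring] at ihn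
      rw [show n + 1 + 2 * k + 2 = n + 2 * k + 3 by ring] at hk
      push_cast
      linear_combination ihn + hk

theorem hasSum_fib_mul_pow {t : ℝ} (ht : |t| < goldenRatio⁻¹) :
    HasSum (fun n => (fib n : ℝ) * t ^ n) (t / (1 - t - t ^ 2)) := by
  have htφ : |t * goldenRatio| < 1 := by
    rw [abs_mul, abs_of_pos goldenRatio_pos, ← inv_mul_cancel₀ goldenRatio_ne_zero]
    exact mul_lt_mul_of_pos_right ht goldenRatio_pos
  have htψ : |t * goldenConj| < 1 := by
    rw [abs_mul]
    refine mul_lt_one_of_nonneg_of_lt_one_left (abs_nonneg t)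
      (ht.trans (inv_lt_one_of_one_lt₀ one_lt_goldenRatio)) ?_
    exact abs_le.mpr ⟨neg_one_lt_goldenConj.le, goldenConj_neg.le.trans zero_le_one⟩
  have hφ0 : 1 - t * goldenRatio ≠ 0 := by linarith [(abs_lt.mp htφ).2]
  have hψ0 : 1 - t * goldenConj ≠ 0 := by linarith [(abs_lt.mp htψ).2]
  have hden : 1 - t - t ^ 2 = (1 - t * goldenRatio) * (1 - t * goldenConj) := by
    linear_combination (-t) * goldenRatio_add_goldenConj - t ^ 2 * goldenRatio_mul_goldenConj
  have hbinet := ((hasSum_geometric_of_abs_lt_one htφ).sub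
    (hasSum_geometric_of_abs_lt_one htψ)).div_const √5
  simp_rw [mul_pow, ← mul_sub, mul_div_assoc, ← coe_fib_eq, mul_comm (t ^ _)] at hbinet
  refine (?_ : t / (1 - t - t ^ 2) = _) ▸ hbinet
  have hdiff : 1 - t * goldenConj - (1 - t * goldenRatio) = t * √5 := by
    rw [← goldenRatio_sub_goldenConj]; ring
  rw [hden, inv_sub_inv hφ0 hψ0, hdiff, mul_div_right_comm, mul_div_cancel_right₀ _ (by positivity)]

theorem hasSum_fib_add_mul_pow (m : ℕ) {t : ℝ} (ht : |t| < goldenRatio⁻¹) :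
    HasSum (fun n => (fib (m + n + 1) : ℝ) * t ^ (n + 1))
      (t * (fib (m + 1) + t * fib m) / (1 - t - t ^ 2)) := by
  have hF := hasSum_fib_mul_pow ht
  have hshift : HasSum (fun n => (fib (n + 1) : ℝ) * t ^ (n + 1)) (t / (1 - t - t ^ 2)) := by
    simpa using (hasSum_nat_add_iff' 1).mpr hF
  have hterm (n : ℕ) : (fib (m + n + 1) : ℝ) * t ^ (n + 1) =
      fib (m + 1) * (fib (n + 1) * t ^ (n + 1)) + fib m * (fib n * t ^ n * t) := by
    rw [fib_add]
    push_cast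
    ring
  simp_rw [hterm]
  rw [show t * (fib (m + 1) + t * fib m) / (1 - t - t ^ 2) =
    fib (m + 1) * (t / (1 - t - t ^ 2)) + fib m * (t / (1 - t - t ^ 2) * t) by ring]
  exact (hshift.mul_left _).add ((hF.mul_right t).mul_left _)

theorem row_generating_function (k : ℕ) (hk : 1 ≤ k) (t : ℝ)
    (ht : |t| < (Real.sqrt 5 - 1) / 2) :
    HasSum (fun n : ℕ => (A (n + 1) k + B (n + 1) k) * t ^ (n + 1))
      (t * ((Nat.fib (2 * k) : ℝ) + t * Nat.fib (2 * k - 1)) / (1 - t - t ^ 2)) := by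
  obtain ⟨j, rfl⟩ : ∃ j, k = j + 1 := ⟨k - 1, by omega⟩
  have hφ : (√5 - 1) / 2 = goldenRatio⁻¹ := by rw [inv_goldenRatio, goldenConj]; ring
  rw [hφ] at ht
  rw [show 2 * (j + 1) - 1 = 2 * j + 1 by omega, show 2 * (j + 1) = 2 * j + 1 + 1 by ring]
  convert hasSum_fib_add_mul_pow (2 * j + 1) ht using 3 with n
  rw [A_add_B_eq_fib]
  ring_nf
end

section
/- For n ≥ 0, k ≥ 0, and 0 ≤ s ≤ (r-n-1)/2, the incomplete Fibonacci numbers satisfy the inversion formula F_{r+n}(s+n) = Σ_{k=0}^{n} C(n,k) (-1)^{n-k} F_{r+2k}(s+k). -/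
def incFib (n k : ℕ) : ℕ := ∑ j ∈ Finset.range (k + 1), Nat.choose (n - 1 - j) j

/-!
Put `u a t = F_{r+a+t}(s+t)`. For `N ≥ 1` the incomplete Fibonacci numbers obey the Fibonacci
recurrence `F_{N+2}(k+1) = F_{N+1}(k+1) + F_N(k)`, and `r ≥ 1` makes it available for `u`:
`u (a+1) (t+1) - u a (t+1) = u a t`. Consequently the `n`-th forward difference of the diagonal
`k ↦ u k k = F_{r+2k}(s+k)` at `0` is `u 0 n = F_{r+n}(s+n)`, and Newton's expansion of that
forward difference in the values of the diagonal is the inversion formula.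
-/

open Finset fwdDiff

theorem Nat.choose_sub_pascal {N : ℕ} (hN : N ≠ 0) (j : ℕ) :
    (N - j).choose (j + 1) = (N - 1 - j).choose (j + 1) + (N - 1 - j).choose j := by
  rcases lt_or_ge j N with hj | hj
  · rw [show N - j = N - 1 - j + 1 by omega, Nat.choose_succ_succ, add_comm]
  · simp [Nat.sub_eq_zero_of_le hj, Nat.sub_eq_zero_of_le (show N - 1 ≤ j by omega),
      Nat.choose_eq_zero_of_lt (show 0 < j by omega)]

theorem incFib_add_two_succ {N : ℕ} (hN : N ≠ 0) (k : ℕ) :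
    incFib (N + 2) (k + 1) = incFib (N + 1) (k + 1) + incFib N k := by
  simp only [incFib, sum_range_succ' _ (k + 1), Nat.choose_zero_right]
  rw [add_right_comm, ← sum_add_distrib]
  congr 1
  refine sum_congr rfl fun j _ => ?_
  rw [show N + 2 - 1 - (j + 1) = N - j by omega, show N + 1 - 1 - (j + 1) = N - 1 - j by omega,
    Nat.choose_sub_pascal hN]

theorem fwdDiff_iter_diag_of_pascal {G : Type*} [AddCommGroup G] {u : ℕ → ℕ → G}
    (hu : ∀ a t, u (a + 1) (t + 1) = u a (t + 1) + u a t) (m t : ℕ) :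
    (Δ_[1])^[m] (fun k => u k (k + t)) = fun k => u k (k + t + m) := by
  induction m generalizing t with
  | zero => rfl
  | succ m ih =>
    have hΔ : Δ_[1] (fun k => u k (k + t)) = fun k => u k (k + (t + 1)) := by
      funext k
      rw [fwdDiff, show k + 1 + t = k + t + 1 by omega, hu, add_sub_cancel_right, ← add_assoc]
    rw [Function.iterate_succ_apply, hΔ, ih]
    simp only [add_assoc, add_comm 1 m]

theorem incFib_inversion (n r s : ℕ) (h : 2 * s + n + 1 ≤ r) :
    (incFib (r + n) (s + n) : ℤ) =
      ∑ k ∈ Finset.range (n + 1),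
        (Nat.choose n k : ℤ) * (-1) ^ (n - k) * incFib (r + 2 * k) (s + k) := by
  set u : ℕ → ℕ → ℤ := fun a t => incFib (r + a + t) (s + t)
  have hu : ∀ a t, u (a + 1) (t + 1) = u a (t + 1) + u a t := fun a t => by
    simp only [u]
    rw [show r + (a + 1) + (t + 1) = r + a + t + 2 by omega, show s + (t + 1) = s + t + 1 by omega,
      show r + a + (t + 1) = r + a + t + 1 by omega,
      incFib_add_two_succ (show r + a + t ≠ 0 by omega), Nat.cast_add]
  have hdiag := congrFun (fwdDiff_iter_diag_of_pascal hu n 0) 0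
  rw [fwdDiff_iter_eq_sum_shift] at hdiag
  simp only [u, add_zero, zero_add, smul_eq_mul, mul_one] at hdiag
  rw [← hdiag]
  refine sum_congr rfl fun k _ => ?_
  rw [add_assoc, ← two_mul]
  ring
end

section
/- For 0 ≤ s ≤ (r-n)/2, the incomplete Lucas numbers satisfy L_{r+2n}(s+n) = Σ_{k=0}^{n} C(n,k) L_{r+k}(s+k). -/
def incLucas (n k : ℕ) : ℚ :=
  ∑ j ∈ Finset.range (k + 1), (n : ℚ) / (n - j) * Nat.choose (n - j) j

/-!
The terms `t(m, j) = m / (m - j) * C(m - j, j)` satisfy the Lucas recurrence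
`t(m + 2, j + 1) = t(m + 1, j + 1) + t(m, j)` (Pascal's rule plus
`(j + 1) C(a, j + 1) = (a - j) C(a, j)`), so the incomplete Lucas numbers satisfy
`L_{m+2}(k+1) = L_{m+1}(k+1) + L_m(k)`. Read as `L_{r+2n}(s+n) = (1 + E)^n` applied to the pair
`(r, s)`, where `E` shifts both indices by one, this unfolds to the binomial sum by induction on `n`.
-/

def lucasTerm (m j : ℕ) : ℚ :=
  (m : ℚ) / (m - j) * Nat.choose (m - j) j

lemma incLucas_eq_sum_lucasTerm (m k : ℕ) :
    incLucas m k = ∑ j ∈ Finset.range (k + 1), lucasTerm m j := rfl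

lemma lucasTerm_zero {m : ℕ} (hm : m ≠ 0) : lucasTerm m 0 = 1 := by
  simp [lucasTerm, hm]

lemma lucasTerm_succ_succ {m j : ℕ} (hm : 0 < m) (hj : 2 * j ≤ m) :
    lucasTerm (m + 2) (j + 1) = lucasTerm (m + 1) (j + 1) + lucasTerm m j := by
  obtain ⟨a, rfl⟩ : ∃ a, m = j + a := ⟨m - j, by omega⟩
  have hja : j ≤ a := by omega
  have ha : (a : ℚ) ≠ 0 := by exact_mod_cast (show a ≠ 0 by omega)
  have hshift : (a.choose (j + 1) : ℚ) * (j + 1) = a.choose j * ((a : ℚ) - j) := by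
    exact_mod_cast Nat.choose_succ_right_eq a j
  simp only [lucasTerm, show j + a + 2 - (j + 1) = a + 1 by omega,
    show j + a + 1 - (j + 1) = a by omega, Nat.add_sub_cancel_left, Nat.choose_succ_succ']
  push_cast
  rw [show (j : ℚ) + a + 2 - (j + 1) = a + 1 by ring, show (j : ℚ) + a + 1 - (j + 1) = a by ring,
    show (j : ℚ) + a - j = a by ring]
  field_simp
  linear_combination -hshift

lemma incLucas_succ_succ {m k : ℕ} (hm : 0 < m) (hk : 2 * k ≤ m) :
    incLucas (m + 2) (k + 1) = incLucas (m + 1) (k + 1) + incLucas m k := by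
  simp only [incLucas_eq_sum_lucasTerm]
  rw [Finset.sum_range_succ' _ (k + 1), Finset.sum_range_succ' _ (k + 1),
    lucasTerm_zero (by omega), lucasTerm_zero (by omega),
    Finset.sum_congr rfl fun j hj => lucasTerm_succ_succ hm (by simp at hj; omega),
    Finset.sum_add_distrib]
  ring

theorem incLucas_binomial_sum (n r s : ℕ) (h : 2 * s + n ≤ r) :
    incLucas (r + 2 * n) (s + n) =
      ∑ k ∈ Finset.range (n + 1), (Nat.choose n k : ℚ) * incLucas (r + k) (s + k) := by
  induction n generalizing r s with
  | zero => simp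
  | succ n ih =>
    have hrec : incLucas (r + 2 * (n + 1)) (s + (n + 1)) =
        incLucas ((r + 1) + 2 * n) ((s + 1) + n) + incLucas (r + 2 * n) (s + n) := by
      rw [show r + 2 * (n + 1) = r + 2 * n + 2 by ring, show r + 1 + 2 * n = r + 2 * n + 1 by ring,
        show s + 1 + n = s + n + 1 by ring, ← add_assoc]
      exact incLucas_succ_succ (by omega) (by omega)
    rw [hrec, ih r s (by omega), ih (r + 1) (s + 1) (by omega),
      Finset.sum_choose_succ_mul (fun k _ => incLucas (r + k) (s + k)), add_comm]
    simp only [add_right_comm _ 1, ← add_assoc]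
end

section
/- For all k ≥ 0, L_{2k+1} = Σ_{i=0}^{k-1} (k - i) L_{2i+1} + 2k + 1. -/
lemma lucas_add_two (n : ℕ) : lucas (n + 2) = lucas (n + 1) + lucas n := rfl

lemma sum_range_lucas_odd_add_two (k : ℕ) :
    (∑ i ∈ Finset.range k, lucas (2 * i + 1)) + 2 = lucas (2 * k) := by
  induction k with
  | zero => rfl
  | succ k ih =>
    rw [Finset.sum_range_succ, add_right_comm, ih, mul_add_one, lucas_add_two, add_comm]

lemma Finset.sum_range_succ_tsub_nsmul {M : Type*} [AddCommMonoid M] (f : ℕ → M) (k : ℕ) :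
    ∑ i ∈ range (k + 1), (k + 1 - i) • f i =
      ∑ i ∈ range k, (k - i) • f i + ∑ i ∈ range (k + 1), f i := by
  have hsplit : ∀ i ∈ range k, (k + 1 - i) • f i = (k - i) • f i + f i := fun i hi => by
    rw [Nat.sub_add_comm (mem_range.mp hi).le, succ_nsmul]
  rw [sum_range_succ, sum_congr rfl hsplit, sum_add_distrib, sum_range_succ _ k,
    Nat.add_sub_cancel_left, one_nsmul, add_assoc]

theorem lucas_odd_weighted_sum (k : ℕ) :
    lucas (2 * k + 1) =
      (∑ i ∈ Finset.range k, (k - i) * lucas (2 * i + 1)) + 2 * k + 1 := by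
  induction k with
  | zero => rfl
  | succ k ih =>
    have hweighted := Finset.sum_range_succ_tsub_nsmul (fun i => lucas (2 * i + 1)) k
    simp only [smul_eq_mul] at hweighted
    have hodd := sum_range_lucas_odd_add_two (k + 1)
    rw [show 2 * (k + 1) + 1 = 2 * k + 1 + 2 by ring, lucas_add_two,
      show 2 * k + 1 + 1 = 2 * (k + 1) by ring, ← hodd, hweighted, ih]
    ring
end
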